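/- Pointwise remainder bound for the averaged Taylor polynomial (vector-valued analogue of Bramble–Hilbert, used in the proof of Lemma A.1 (v)): for every s ∈ ℕ and C_η ≥ 0 there exists a constant C ≥ 0, depending only on s and C_η, with the following property. Whenever h, I, η are as in the context with sup_{σ∈ℝ} |η(σ)| ≤ C_η · h^{−1}, and v : ℝ → X is of class C^{s+1}, then for every τ ∈ I, ‖v(τ) − (T^s v)(τ)‖_X ≤ C · ∫_I |τ−σ|^s · ‖(iteratedDeriv (s+1) v)(σ)‖_X dσ. -/

import Mathlib

open MeasureTheory Finset

noncomputable section

/-- The averaged Taylor polynomial of order `s` of `v : ℝ → X` with respect to the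
density `η` supported in the interval `I`:
`(T^s v)(τ) := Σ_{ℓ=0}^s (1/ℓ!) ∫_I ((τ−σ)^ℓ η(σ)) • v^{(ℓ)}(σ) dσ`. -/
def avgTaylor {X : Type*} [NormedAddCommGroup X] [NormedSpace ℝ X]
    (s : ℕ) (I : Set ℝ) (η : ℝ → ℝ) (v : ℝ → X) (τ : ℝ) : X :=
  ∑ ℓ ∈ Finset.range (s + 1),
    ((ℓ.factorial : ℝ))⁻¹ • ∫ σ in I, ((τ - σ) ^ ℓ * η σ) • iteratedDeriv ℓ v σ

/-- **Pointwise remainder bound for the averaged Taylor polynomial** (vector-valued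
Bramble–Hilbert, used in the proof of Lemma A.1 (v)): for every `s` and `C_η` there is a
constant `C = C(s, C_η)` such that whenever `|η| ≤ C_η h^{−1}` (with `h = b − a`) and `v`
is of class `C^{s+1}`, then
`‖v(τ) − (T^s v)(τ)‖ ≤ C ∫_I |τ−σ|^s ‖v^{(s+1)}(σ)‖ dσ` for all `τ ∈ I`. -/
theorem avgTaylor_pointwise_remainder.{u} (s : ℕ) (Cη : ℝ) (hCη : 0 ≤ Cη) :
    ∃ C : ℝ, 0 ≤ C ∧
      ∀ (X : Type u) [NormedAddCommGroup X] [NormedSpace ℝ X] [CompleteSpace X]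
        (a b : ℝ), a < b →
      ∀ η : ℝ → ℝ, ContDiff ℝ (⊤ : ℕ∞) η → Function.support η ⊆ Set.Ioo a b →
        (∫ σ, η σ) = 1 →
        (∀ σ : ℝ, |η σ| ≤ Cη * (b - a)⁻¹) →
      ∀ v : ℝ → X, ContDiff ℝ ((s : ℕ∞) + 1) v →
      ∀ τ ∈ Set.Ioo a b,
        ‖v τ - avgTaylor s (Set.Ioo a b) η v τ‖
          ≤ C * ∫ σ in Set.Ioo a b, |τ - σ| ^ s * ‖iteratedDeriv (s + 1) v σ‖ := by
  classical
  refine ⟨Cη * (s.factorial : ℝ)⁻¹, by positivity, ?_⟩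
  intro X _ _ _ a b hab η hη hsupp hηint hηbd v hv τ hτ
  set I : Set ℝ := Set.Ioo a b with hI
  set D : ℝ → X := iteratedDeriv (s + 1) v with hDdef
  have hDcont : Continuous D := hv.continuous_iteratedDeriv (s + 1) (by push_cast; rfl)
  have hiter : ∀ ℓ : ℕ, ℓ ≤ s + 1 → Continuous (iteratedDeriv ℓ v) := by
    intro ℓ hℓ
    exact hv.continuous_iteratedDeriv ℓ (by exact_mod_cast Nat.cast_le.mpr hℓ)
  set K : ℝ := ∫ σ in I, |τ - σ| ^ s * ‖D σ‖ with hKdef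
  have hK0 : 0 ≤ K := by
    apply integral_nonneg
    intro x; positivity
  -- the remainder function
  set R : ℝ → X := fun σ => ∫ t in σ..τ, (((s.factorial : ℝ))⁻¹ * (τ - t) ^ s) • D t with hRdef
  -- derivative of the Taylor polynomial in the base point
  have hderiv : ∀ t : ℝ, HasDerivAt (fun y => taylorWithinEval v s Set.univ y τ)
      ((((s.factorial : ℝ))⁻¹ * (τ - t) ^ s) • D t) t := by
    intro t
    have hlt : ((s : ℕ) : WithTop ℕ∞) < ((s : ℕ∞) : WithTop ℕ∞) + 1 := by
      exact_mod_cast Nat.lt_succ_self s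
    have hle : ((s : ℕ) : WithTop ℕ∞) ≤ ((s : ℕ∞) : WithTop ℕ∞) + 1 := hlt.le
    have h1 : DifferentiableWithinAt ℝ (iteratedDerivWithin s v Set.univ) Set.univ t := by
      rw [iteratedDerivWithin_univ]
      exact ((hv.differentiable_iteratedDeriv s hlt) t).differentiableWithinAt
    have := hasDerivWithinAt_taylorWithinEval (f := v) (x := τ) (y := t) (n := s)
      (s := Set.univ) (s' := Set.univ) uniqueDiffOn_univ
      Filter.univ_mem (Set.mem_univ t) subset_rfl
      (hv.of_le hle).contDiffOn h1
    rw [iteratedDerivWithin_univ] at this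
    exact (hasDerivWithinAt_univ.mp this)
  have hTaylor : ∀ σ : ℝ, v τ - taylorWithinEval v s Set.univ σ τ = R σ := by
    intro σ
    have hcont : Continuous fun t => (((s.factorial : ℝ))⁻¹ * (τ - t) ^ s) • D t := by
      fun_prop
    have := intervalIntegral.integral_eq_sub_of_hasDerivAt
      (f := fun y => taylorWithinEval v s Set.univ y τ)
      (fun t _ => hderiv t) (hcont.intervalIntegrable σ τ)
    simp only [taylorWithinEval_self] at this
    exact this.symm
  -- integrability of the pieces
  have hKint : IntegrableOn (fun t => |τ - t| ^ s * ‖D t‖) I := by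
    have : Continuous fun t => |τ - t| ^ s * ‖D t‖ := by fun_prop
    exact (this.integrableOn_Icc (a := a) (b := b)).mono_set Set.Ioo_subset_Icc_self
  -- bound on R on I
  have hRbound : ∀ σ ∈ I, ‖R σ‖ ≤ ((s.factorial : ℝ))⁻¹ * K := by
    intro σ hσ
    have h1 : ‖R σ‖ ≤ ∫ t in Set.uIoc σ τ, ‖(((s.factorial : ℝ))⁻¹ * (τ - t) ^ s) • D t‖ :=
      intervalIntegral.norm_integral_le_integral_norm_uIoc
    have hnorm : ∀ t : ℝ, ‖(((s.factorial : ℝ))⁻¹ * (τ - t) ^ s) • D t‖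
        = ((s.factorial : ℝ))⁻¹ * (|τ - t| ^ s * ‖D t‖) := by
      intro t
      rw [norm_smul, Real.norm_eq_abs, abs_mul, abs_pow, abs_inv, Nat.abs_cast, mul_assoc]
    have hsub : Set.uIoc σ τ ⊆ I := by
      intro x hx
      rcases hx with ⟨hx1, hx2⟩
      exact ⟨lt_of_le_of_lt (le_min hσ.1.le hτ.1.le) hx1,
        lt_of_le_of_lt hx2 (max_lt hσ.2 hτ.2)⟩
    calc ‖R σ‖ ≤ ∫ t in Set.uIoc σ τ, ‖(((s.factorial : ℝ))⁻¹ * (τ - t) ^ s) • D t‖ := h1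
      _ = ∫ t in Set.uIoc σ τ, ((s.factorial : ℝ))⁻¹ * (|τ - t| ^ s * ‖D t‖) := by
          simp_rw [hnorm]
      _ = ((s.factorial : ℝ))⁻¹ * ∫ t in Set.uIoc σ τ, |τ - t| ^ s * ‖D t‖ := by
          rw [integral_const_mul]
      _ ≤ ((s.factorial : ℝ))⁻¹ * K := by
          have hmono := setIntegral_mono_set hKint
            (Filter.Eventually.of_forall fun x => by positivity)
            (HasSubset.Subset.eventuallyLE hsub)
          exact mul_le_mul_of_nonneg_left hmono (by positivity)
  -- rewrite avgTaylor as a single integral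
  have hintℓ : ∀ ℓ : ℕ, ℓ ∈ Finset.range (s + 1) →
      IntegrableOn (fun σ => (η σ * (((ℓ.factorial : ℝ))⁻¹ * (τ - σ) ^ ℓ)) •
        iteratedDeriv ℓ v σ) I := by
    intro ℓ hℓ
    have hc : Continuous (iteratedDeriv ℓ v) :=
      hiter ℓ (Nat.le_of_lt_succ (Finset.mem_range.mp hℓ) |>.trans (Nat.le_succ s))
    have : Continuous fun σ => (η σ * (((ℓ.factorial : ℝ))⁻¹ * (τ - σ) ^ ℓ)) •
        iteratedDeriv ℓ v σ := (hη.continuous.mul (by fun_prop)).smul hc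
    exact (this.integrableOn_Icc (a := a) (b := b)).mono_set Set.Ioo_subset_Icc_self
  have havg : avgTaylor s I η v τ = ∫ σ in I, η σ • taylorWithinEval v s Set.univ σ τ := by
    have hP : ∀ σ : ℝ, η σ • taylorWithinEval v s Set.univ σ τ
        = ∑ ℓ ∈ Finset.range (s + 1),
          (η σ * (((ℓ.factorial : ℝ))⁻¹ * (τ - σ) ^ ℓ)) • iteratedDeriv ℓ v σ := by
      intro σ
      rw [taylor_within_apply]
      rw [Finset.smul_sum]
      refine Finset.sum_congr rfl fun ℓ _ => ?_
      rw [iteratedDerivWithin_univ, smul_smul]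
    simp_rw [hP]
    rw [integral_finset_sum _ hintℓ]
    unfold avgTaylor
    refine Finset.sum_congr rfl fun ℓ _ => ?_
    rw [← integral_smul]
    refine integral_congr_ae (Filter.Eventually.of_forall fun σ => ?_)
    simp only [smul_smul]
    congr 1
    ring
  -- the main identity
  have hηI : ∫ σ in I, η σ = 1 := by
    rw [setIntegral_eq_integral_of_forall_compl_eq_zero
      (fun x hx => Function.notMem_support.mp fun hs => hx (hsupp hs))]
    exact hηint
  have hgcont : Continuous fun σ => taylorWithinEval v s Set.univ σ τ := by
    have hle : ((s : ℕ) : WithTop ℕ∞) ≤ ((s : ℕ∞) : WithTop ℕ∞) + 1 := by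
      exact_mod_cast (Nat.lt_succ_self s).le
    rw [← continuousOn_univ]
    exact continuousOn_taylorWithinEval uniqueDiffOn_univ (hv.of_le hle).contDiffOn
  have hRcont : Continuous R := by
    have : R = fun σ => v τ - taylorWithinEval v s Set.univ σ τ := by
      funext σ; exact (hTaylor σ).symm
    rw [this]
    exact continuous_const.sub hgcont
  have hηRint : IntegrableOn (fun σ => η σ • R σ) I :=
    ((hη.continuous.smul hRcont).integrableOn_Icc (a := a) (b := b)).mono_set
      Set.Ioo_subset_Icc_self
  have hkey : v τ - avgTaylor s I η v τ = ∫ σ in I, η σ • R σ := by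
    have h1 : ∀ σ : ℝ, η σ • R σ = η σ • v τ - η σ • taylorWithinEval v s Set.univ σ τ := by
      intro σ
      rw [← smul_sub, hTaylor σ]
    simp_rw [h1]
    rw [integral_sub, integral_smul_const, hηI, one_smul, ← havg]
    · exact ((hη.continuous.integrableOn_Icc (a := a) (b := b)).mono_set
        Set.Ioo_subset_Icc_self).smul_const (v τ)
    · exact ((hη.continuous.smul hgcont).integrableOn_Icc (a := a) (b := b)).mono_set
        Set.Ioo_subset_Icc_self
  -- final estimate
  have hfin : (volume I) < ⊤ := by
    rw [hI, Real.volume_Ioo]; exact ENNReal.ofReal_lt_top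
  have hvol : (volume I).toReal = b - a := by
    rw [hI, Real.volume_Ioo, ENNReal.toReal_ofReal (by linarith)]
  have hbd : ∀ σ ∈ I, ‖η σ • R σ‖ ≤ (Cη * (b - a)⁻¹) * (((s.factorial : ℝ))⁻¹ * K) := by
    intro σ hσ
    rw [norm_smul, Real.norm_eq_abs]
    have hba : (0:ℝ) < b - a := by linarith
    exact mul_le_mul (hηbd σ) (hRbound σ hσ) (norm_nonneg _) (by positivity)
  have := norm_setIntegral_le_of_norm_le_const hfin hbd
  rw [hkey]
  calc ‖∫ σ in I, η σ • R σ‖ ≤ (Cη * (b - a)⁻¹) * (((s.factorial : ℝ))⁻¹ * K) * (volume I).toReal :=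
        this
    _ = Cη * (s.factorial : ℝ)⁻¹ * K := by
        have hba : b - a ≠ 0 := by linarith
        rw [hvol]; field_simp
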